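/- arXiv:1312.0210 — 5 statements merged into one kernel-verified Lean document; each statement's English description precedes it below -/
import Mathlib

section
/- A bipartite graph G is a forest (i.e., contains no cycle) if and only if G does not contain K_{2,2} as a bipartite minor. -/
/-- A finite simple graph with vertex set a finite subset of `ℕ`. -/
structure NatGraph where
  verts : Finset ℕ
  Adj : ℕ → ℕ → Prop
  symm : ∀ ⦃x y⦄, Adj x y → Adj y x
  loopless : ∀ x, ¬ Adj x x
  mem_of_adj : ∀ ⦃x y⦄, Adj x y → x ∈ verts ∧ y ∈ verts

namespace NatGraph

/-- The underlying `SimpleGraph` on `ℕ`. -/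
def toSimpleGraph (G : NatGraph) : SimpleGraph ℕ where
  Adj := G.Adj
  symm := ⟨fun _ _ h => G.symm h⟩
  loopless := ⟨fun x h => G.loopless x h⟩

/-- A graph is bipartite if its vertices can be properly 2-colored. -/
def IsBipartite (G : NatGraph) : Prop :=
  ∃ c : ℕ → Bool, ∀ ⦃x y⦄, G.Adj x y → c x ≠ c y

/-- Delete a set of vertices (and all incident edges). -/
def deleteVerts (G : NatGraph) (S : Finset ℕ) : NatGraph where
  verts := G.verts \ S
  Adj x y := G.Adj x y ∧ x ∉ S ∧ y ∉ S
  symm := fun _ _ h => ⟨G.symm h.1, h.2.2, h.2.1⟩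
  loopless := fun x h => G.loopless x h.1
  mem_of_adj := fun x y h => by
    obtain ⟨hx, hy⟩ := G.mem_of_adj h.1
    exact ⟨Finset.mem_sdiff.2 ⟨hx, h.2.1⟩, Finset.mem_sdiff.2 ⟨hy, h.2.2⟩⟩

/-- Delete a single vertex. -/
def deleteVert (G : NatGraph) (x : ℕ) : NatGraph := G.deleteVerts {x}

/-- Delete a single edge. -/
def deleteEdge (G : NatGraph) (x y : ℕ) : NatGraph where
  verts := G.verts
  Adj a b := G.Adj a b ∧ ¬((a = x ∧ b = y) ∨ (a = y ∧ b = x))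
  symm := fun _ _ h => ⟨G.symm h.1, fun hc => h.2 (by tauto)⟩
  loopless := fun a h => G.loopless a h.1
  mem_of_adj := fun _ _ h => G.mem_of_adj h.1

/-- Contraction of a vertex `u` with a vertex `v`: identify `u` with `v`
(deleting one copy of each resulting double edge). -/
def contract (G : NatGraph) (u v : ℕ) : NatGraph where
  verts := G.verts.erase u
  Adj a b := a ≠ b ∧ a ∈ G.verts.erase u ∧ b ∈ G.verts.erase u ∧
    ∃ p q, G.Adj p q ∧ (if p = u then v else p) = a ∧ (if q = u then v else q) = b
  symm := fun a b h => ⟨h.1.symm, h.2.2.1, h.2.1, by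
    obtain ⟨p, q, h1, h2, h3⟩ := h.2.2.2
    exact ⟨q, p, G.symm h1, h3, h2⟩⟩
  loopless := fun a h => h.1 rfl
  mem_of_adj := fun _ _ h => ⟨h.2.1, h.2.2.1⟩

/-- The number of connected components of a graph (on its vertex set). -/
noncomputable def numComponents (G : NatGraph) : ℕ :=
  Nat.card (SimpleGraph.induce (G.verts : Set ℕ) G.toSimpleGraph).ConnectedComponent

/-- A cycle is peripheral if it is induced (no two nonadjacent vertices of the
cycle are joined by an edge of `G`) and non-separating (deleting its vertices
does not increase the number of connected components). -/
def Peripheral (G : NatGraph) {a : ℕ} (C : G.toSimpleGraph.Walk a a) : Prop :=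
  C.IsCycle ∧
  (∀ x ∈ C.support, ∀ y ∈ C.support, G.Adj x y → s(x, y) ∈ C.edges) ∧
  (G.deleteVerts C.support.toFinset).numComponents ≤ G.numComponents

/-- A contraction of `u` with `v` is admissible if they have a common neighbor `w`
such that the path `(u, w, v)` is part of a peripheral cycle. -/
def AdmissibleContraction (G : NatGraph) (u v : ℕ) : Prop :=
  u ≠ v ∧ ∃ (w a : ℕ) (C : G.toSimpleGraph.Walk a a),
    G.Adj u w ∧ G.Adj w v ∧ G.Peripheral C ∧ s(u, w) ∈ C.edges ∧ s(w, v) ∈ C.edges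

/-- One step in the formation of a bipartite minor: deletion of a vertex,
deletion of an edge, or an admissible contraction. -/
inductive MinorStep : NatGraph → NatGraph → Prop
  | deleteVert (G : NatGraph) (x : ℕ) : MinorStep (G.deleteVert x) G
  | deleteEdge (G : NatGraph) (x y : ℕ) (h : G.Adj x y) : MinorStep (G.deleteEdge x y) G
  | contract (G : NatGraph) (u v : ℕ) (h : G.AdmissibleContraction u v) :
      MinorStep (G.contract u v) G

/-- `H` is a bipartite minor of `G` if it is obtained from `G` by a finite sequence
of vertex deletions, edge deletions, and admissible contractions. -/
def IsBipMinorOf (H G : NatGraph) : Prop := Relation.ReflTransGen MinorStep H G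

/-- `H` is a subgraph of `G`. -/
def IsSubgraphOf (H G : NatGraph) : Prop :=
  H.verts ⊆ G.verts ∧ ∀ ⦃x y⦄, H.Adj x y → G.Adj x y

/-- `G` is (a copy of) the complete bipartite graph `K_{m,n}`. -/
def IsCompleteBipartiteOn (G : NatGraph) (m n : ℕ) : Prop :=
  ∃ S T : Finset ℕ, S.card = m ∧ T.card = n ∧ Disjoint S T ∧ G.verts = S ∪ T ∧
    ∀ x y, G.Adj x y ↔ ((x ∈ S ∧ y ∈ T) ∨ (x ∈ T ∧ y ∈ S))

/-- `G` is (a copy of) the complete graph `K_n`. -/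
def IsCompleteOn (G : NatGraph) (n : ℕ) : Prop :=
  ∃ S : Finset ℕ, S.card = n ∧ G.verts = S ∧
    ∀ x y, G.Adj x y ↔ (x ∈ S ∧ y ∈ S ∧ x ≠ y)

/-- Witness data exhibiting `H` as a subdivision of `K` : for each edge `xy` of `K`,
`P x y` is the list of interior vertices of the path of `H` replacing `xy`. -/
structure IsSubdivDataOf (K H : NatGraph) (P : ℕ → ℕ → List ℕ) : Prop where
  verts_subset : K.verts ⊆ H.verts
  rev : ∀ ⦃x y⦄, K.Adj x y → P y x = (P x y).reverse
  interior_new : ∀ ⦃x y⦄, K.Adj x y → ∀ z ∈ P x y, z ∉ K.verts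
  nodup : ∀ ⦃x y⦄, K.Adj x y → (x :: (P x y ++ [y])).Nodup
  disj : ∀ ⦃x y a b⦄, K.Adj x y → K.Adj a b → s(x, y) ≠ s(a, b) →
    ∀ z ∈ P x y, z ∉ P a b
  verts_eq : (H.verts : Set ℕ) = ↑K.verts ∪ {z | ∃ x y, K.Adj x y ∧ z ∈ P x y}
  adj_iff : ∀ a b, H.Adj a b ↔ ∃ x y, K.Adj x y ∧ [a, b] <:+: (x :: (P x y ++ [y]))

/-- `H` is a subdivision of `K`. -/
def IsSubdivisionOf (H K : NatGraph) : Prop := ∃ P, IsSubdivDataOf K H P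

/-- `G` contains `K_{3,3}` as a bipartite minor. -/
def HasK33BipMinor (G : NatGraph) : Prop :=
  ∃ H : NatGraph, H.IsCompleteBipartiteOn 3 3 ∧ H.IsBipMinorOf G

end NatGraph

/-!
Admissible contractions require a peripheral cycle, so bipartite minors of a forest are forests,
whereas `K₂,₂` is a 4-cycle. Conversely, a cycle of a bipartite graph has even length. Deleting
everything off the cycle leaves a graph that is just the cycle, which is then trivially peripheral;
contracting two vertices at distance two along it shortens it by two. Repeating this reaches a
4-cycle, that is, `K₂,₂`.
-/

namespace SimpleGraph.Walk

variable {V W : Type*} {G : SimpleGraph V} {G' : SimpleGraph W}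

lemma IsPath.isCycle_map_copy (f : G →g G') {u v : V} {p : G.Walk u v} (hp : p.IsPath)
    (hf : Set.InjOn f {x | x ∈ p.support.tail}) (hfuv : f v = f u) (hlen : 3 ≤ p.length) :
    ((p.map f).copy rfl hfuv).IsCycle := by
  have hnil : ¬ ((p.map f).copy rfl hfuv).Nil := by
    rw [← length_eq_zero_iff, length_copy, length_map]; omega
  rw [isCycle_iff_isPath_tail_and_le_length, isPath_def, support_tail_of_not_nil _ hnil,
    support_copy, support_map, ← List.map_tail]
  exact ⟨hp.support_nodup.sublist (List.tail_sublist _) |>.map_on fun x hx y hy => hf hx hy,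
    by simpa using hlen⟩

end SimpleGraph.Walk

namespace NatGraph

open SimpleGraph Walk

lemma ext {G H : NatGraph} (hv : G.verts = H.verts) (ha : ∀ x y, G.Adj x y ↔ H.Adj x y) :
    G = H := by
  obtain ⟨vG, aG, _, _, _⟩ := G
  obtain ⟨vH, aH, _, _, _⟩ := H
  obtain rfl : aG = aH := funext₂ fun x y => propext (ha x y)
  obtain rfl : vG = vH := hv
  rfl

lemma MinorStep.isAcyclic {H G : NatGraph} (h : MinorStep H G) (hG : G.toSimpleGraph.IsAcyclic) :
    H.toSimpleGraph.IsAcyclic := by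
  cases h with
  | deleteVert => exact hG.anti fun _ _ hxy => hxy.1
  | deleteEdge => exact hG.anti fun _ _ hxy => hxy.1
  | contract _ _ _ hadm =>
    obtain ⟨-, _, _, C, -, -, hC, -⟩ := hadm
    exact absurd hC.1 (hG C)

lemma IsBipMinorOf.isAcyclic {H G : NatGraph} (hM : H.IsBipMinorOf G)
    (hG : G.toSimpleGraph.IsAcyclic) : H.toSimpleGraph.IsAcyclic := by
  induction hM using Relation.ReflTransGen.head_induction_on with
  | refl => exact hG
  | head hstep _ ih => exact hstep.isAcyclic ih

lemma IsCompleteBipartiteOn.not_isAcyclic {H : NatGraph} (hK : H.IsCompleteBipartiteOn 2 2) :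
    ¬ H.toSimpleGraph.IsAcyclic := by
  obtain ⟨S, T, hS, hT, hST, -, hadj⟩ := hK
  obtain ⟨p₁, p₂, hp, rfl⟩ := Finset.card_eq_two.1 hS
  obtain ⟨q₁, q₂, hq, rfl⟩ := Finset.card_eq_two.1 hT
  have hne : ∀ x ∈ ({p₁, p₂} : Finset ℕ), ∀ y ∈ ({q₁, q₂} : Finset ℕ), x ≠ y :=
    fun x hx y hy hxy => Finset.disjoint_left.1 hST hx (hxy ▸ hy)
  have adj : ∀ x ∈ ({p₁, p₂} : Finset ℕ), ∀ y ∈ ({q₁, q₂} : Finset ℕ),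
      H.toSimpleGraph.Adj x y ∧ H.toSimpleGraph.Adj y x :=
    fun x hx y hy => ⟨(hadj x y).2 (.inl ⟨hx, hy⟩), (hadj y x).2 (.inr ⟨hy, hx⟩)⟩
  intro hac
  refine hac (.cons (adj p₁ (by simp) q₁ (by simp)).1 <| .cons (adj p₂ (by simp) q₁ (by simp)).2 <|
    .cons (adj p₂ (by simp) q₂ (by simp)).1 <| .cons (adj p₁ (by simp) q₂ (by simp)).2 .nil) ?_
  have h₁₁ := hne p₁ (by simp) q₁ (by simp)
  have h₁₂ := hne p₁ (by simp) q₂ (by simp)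
  have h₂₁ := hne p₂ (by simp) q₁ (by simp)
  have h₂₂ := hne p₂ (by simp) q₂ (by simp)
  simp [cons_isCycle_iff, cons_isPath_iff, *, hp.symm, hq.symm, h₁₁.symm, h₁₂.symm, h₂₁.symm]

lemma deleteVerts_empty (G : NatGraph) : G.deleteVerts ∅ = G :=
  ext (by simp [deleteVerts]) (fun x y => by simp [deleteVerts])

lemma deleteVerts_insert (G : NatGraph) (x : ℕ) (S : Finset ℕ) :
    G.deleteVerts (insert x S) = (G.deleteVerts S).deleteVert x :=
  ext (by simp [deleteVerts, deleteVert, Finset.sdiff_insert, Finset.sdiff_singleton_eq_erase])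
    fun _ _ => by
      simp only [deleteVerts, deleteVert, Finset.mem_insert, Finset.mem_singleton]
      tauto

lemma deleteVerts_isBipMinorOf (G : NatGraph) (S : Finset ℕ) :
    (G.deleteVerts S).IsBipMinorOf G := by
  classical
  induction S using Finset.induction_on with
  | empty => rw [deleteVerts_empty]; exact .refl
  | insert x S _ ih =>
    rw [deleteVerts_insert]
    exact .head (.deleteVert _ x) ih

lemma isBipMinorOf_of_verts_eq {H G : NatGraph} (hv : H.verts = G.verts)
    (hHG : ∀ ⦃x y⦄, H.Adj x y → G.Adj x y) : H.IsBipMinorOf G := by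
  classical
  suffices ∀ (F : Finset (Sym2 ℕ)) (G : NatGraph), H.verts = G.verts →
      (∀ ⦃x y⦄, H.Adj x y → G.Adj x y) → (∀ ⦃x y⦄, G.Adj x y → H.Adj x y ∨ s(x, y) ∈ F) →
      H.IsBipMinorOf G from
    this ((G.verts ×ˢ G.verts).image fun p => s(p.1, p.2)) G hv hHG fun x y hxy =>
      .inr (Finset.mem_image.2 ⟨(x, y), Finset.mem_product.2 (G.mem_of_adj hxy), rfl⟩)
  intro F
  induction F using Finset.induction_on with
  | empty =>
    intro G hv hHG hGH
    exact ext hv (fun x y => ⟨(hHG ·), fun h => (hGH h).resolve_right (by simp)⟩) ▸ .refl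
  | insert e F _ ih =>
    intro G hv hHG hGH
    by_cases he : ∃ x y, G.Adj x y ∧ ¬ H.Adj x y ∧ s(x, y) = e
    · obtain ⟨x, y, hxy, hHxy, rfl⟩ := he
      refine .tail (ih (G.deleteEdge x y) hv (fun p q hpq => ⟨hHG hpq, ?_⟩) ?_)
        (.deleteEdge G x y hxy)
      · rintro (⟨rfl, rfl⟩ | ⟨rfl, rfl⟩)
        exacts [hHxy hpq, hHxy (H.symm hpq)]
      · rintro p q ⟨hpq, hne⟩
        refine (hGH hpq).imp_right fun h => (Finset.mem_insert.1 h).resolve_left ?_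
        rw [Sym2.eq_iff]
        exact hne
    · simp only [not_exists, not_and] at he
      refine ih G hv hHG fun x y hxy => ?_
      by_cases hH : H.Adj x y
      · exact .inl hH
      · exact .inr ((Finset.mem_insert.1 ((hGH hxy).resolve_left hH)).resolve_left (he x y hxy hH))

lemma IsSubgraphOf.isBipMinorOf {H G : NatGraph} (h : H.IsSubgraphOf G) : H.IsBipMinorOf G := by
  classical
  refine .trans (isBipMinorOf_of_verts_eq (G := G.deleteVerts (G.verts \ H.verts)) ?_
    fun x y hxy => ⟨h.2 hxy, ?_, ?_⟩) (G.deleteVerts_isBipMinorOf _)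
  · simp only [deleteVerts, Finset.sdiff_sdiff_eq_self h.1]
  · exact fun hx => (Finset.mem_sdiff.1 hx).2 (H.mem_of_adj hxy).1
  · exact fun hy => (Finset.mem_sdiff.1 hy).2 (H.mem_of_adj hxy).2

def ofWalk {G : NatGraph} {u v : ℕ} (p : G.toSimpleGraph.Walk u v) : NatGraph where
  verts := p.support.toFinset
  Adj x y := s(x, y) ∈ p.edges
  symm _ _ h := Sym2.eq_swap ▸ h
  loopless x h := G.loopless x (p.adj_of_mem_edges h)
  mem_of_adj _ _ h := ⟨List.mem_toFinset.2 (p.fst_mem_support_of_mem_edges h),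
    List.mem_toFinset.2 (p.snd_mem_support_of_mem_edges h)⟩

lemma ofWalk_isSubgraphOf {G : NatGraph} {u v : ℕ} {p : G.toSimpleGraph.Walk u v} (hp : ¬ p.Nil) :
    (ofWalk p).IsSubgraphOf G := by
  refine ⟨fun x hx => ?_, fun x y h => p.adj_of_mem_edges h⟩
  obtain ⟨e, he, hxe⟩ := (mem_support_iff_exists_mem_edges_of_not_nil hp).1 (List.mem_toFinset.1 hx)
  induction e using Sym2.ind with
  | _ y z =>
    have hyz := G.mem_of_adj (p.adj_of_mem_edges he)
    rcases Sym2.mem_iff.1 hxe with rfl | rfl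
    exacts [hyz.1, hyz.2]

structure IsCycleGraph (G : NatGraph) {a : ℕ} (C : G.toSimpleGraph.Walk a a) : Prop where
  isCycle : C.IsCycle
  verts_eq : G.verts = C.support.toFinset
  mem_edges : ∀ ⦃x y⦄, G.Adj x y → s(x, y) ∈ C.edges

lemma exists_isCycleGraph_isBipMinorOf {G : NatGraph} {a : ℕ} {C : G.toSimpleGraph.Walk a a}
    (hC : C.IsCycle) : ∃ (H : NatGraph) (D : H.toSimpleGraph.Walk a a),
      H.IsCycleGraph D ∧ D.length = C.length ∧ H.IsBipMinorOf G := by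
  have hE : ∀ e ∈ C.edges, e ∈ (ofWalk C).toSimpleGraph.edgeSet := fun e he => by
    induction e using Sym2.ind with
    | _ x y => exact he
  refine ⟨ofWalk C, C.transfer _ hE, ⟨hC.transfer hE, ?_, fun x y h => ?_⟩, length_transfer _ _,
    (ofWalk_isSubgraphOf hC.not_nil).isBipMinorOf⟩
  · rw [support_transfer]; rfl
  · rw [edges_transfer]; exact h

lemma numComponents_eq_zero {G : NatGraph} (h : G.verts = ∅) : G.numComponents = 0 := by
  have : IsEmpty (G.verts : Set ℕ) := by simp [h]
  exact Nat.card_of_isEmpty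

lemma IsCycleGraph.peripheral {G : NatGraph} {a : ℕ} {C : G.toSimpleGraph.Walk a a}
    (hC : G.IsCycleGraph C) : G.Peripheral C := by
  refine ⟨hC.isCycle, fun x _ y _ h => hC.mem_edges h, ?_⟩
  rw [numComponents_eq_zero (by simp [deleteVerts, hC.verts_eq])]
  exact Nat.zero_le _

def contractHom (G : NatGraph) {u v : ℕ} (hv : v ∈ G.verts) (huv : u ≠ v) (hadj : ¬ G.Adj u v) :
    G.toSimpleGraph →g (G.contract u v).toSimpleGraph where
  toFun p := if p = u then v else p
  map_rel' {p q} h := by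
    change G.Adj p q at h
    have := G.mem_of_adj h
    have := G.loopless p
    have := G.symm h
    refine ⟨?_, ?_, ?_, p, q, h, rfl, rfl⟩ <;> split_ifs <;> grind

lemma IsCycleGraph.exists_isCycle_contract {G : NatGraph} {a : ℕ} {C : G.toSimpleGraph.Walk a a}
    (hC : G.IsCycleGraph C) (hlen : 6 ≤ C.length) :
    ∃ u v, G.AdmissibleContraction u v ∧ ∃ (b : ℕ) (D : (G.contract u v).toSimpleGraph.Walk b b),
      D.IsCycle ∧ D.length + 2 = C.length := by
  rcases C with _ | ⟨h₁, _ | ⟨h₂, Q⟩⟩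
  · simp at hlen
  · simp at hlen
  rename_i v₁ v₂
  have hlenQ : 4 ≤ Q.length := by simp at hlen; omega
  have hQ : Q.IsPath := ((cons_isPath_iff _ _).1 ((cons_isCycle_iff _ _).1 hC.isCycle).1).1
  have hav₂ : a ≠ v₂ := by
    rintro rfl
    simp [length_eq_zero_iff.2 (isPath_iff_nil.1 hQ)] at hlenQ
  have hnadj : ¬ G.Adj a v₂ := by
    intro h
    have hQa : s(v₂, a) ∉ Q.edges := fun h => by
      have := hQ.length_eq_one_of_mem_edges h
      omega
    have hmem := hC.mem_edges h
    have := h₁.ne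
    have := h₂.ne
    simp only [edges_cons, List.mem_cons, Sym2.eq_iff] at hmem
    grind [Sym2.eq_swap]
  -- identifying `a` with `v₂` closes the path `Q` from `v₂` to `a` into a cycle
  set f := G.contractHom (G.mem_of_adj h₂).2 hav₂ hnadj
  have hf : Set.InjOn f {x | x ∈ Q.support.tail} := by
    have hv₂ : v₂ ∉ Q.support.tail := by
      have := hQ.support_nodup
      rw [← cons_tail_support] at this
      exact (List.nodup_cons.1 this).1
    intro x hx y hy hxy
    simp only [f, contractHom, RelHom.coeFn_mk] at hxy
    split_ifs at hxy <;> grind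
  have hfa : f a = f v₂ := by simp [f, contractHom]
  exact ⟨a, v₂, ⟨hav₂, v₁, a, _, h₁, h₂, hC.peripheral, by simp, by simp⟩, f v₂,
    (Q.map f).copy rfl hfa, hQ.isCycle_map_copy f hf hfa (by omega), by simp⟩

lemma IsCycleGraph.isCompleteBipartiteOn_two_two {G : NatGraph} {a : ℕ}
    {C : G.toSimpleGraph.Walk a a} (hC : G.IsCycleGraph C) (hlen : C.length = 4) :
    G.IsCompleteBipartiteOn 2 2 := by
  rcases C with _ | ⟨h₁, _ | ⟨h₂, _ | ⟨h₃, _ | ⟨h₄, _ | ⟨_, _⟩⟩⟩⟩⟩ <;> simp at hlen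
  rename_i v₁ v₂ v₃
  have hnd := hC.isCycle.support_nodup
  simp only [support_cons, support_nil, List.tail_cons, List.nodup_cons, List.mem_cons,
    List.not_mem_nil, or_false, List.nodup_nil, and_true, not_or] at hnd
  have hedges := hC.mem_edges
  simp only [edges_cons, edges_nil, List.mem_cons, List.not_mem_nil, or_false, Sym2.eq_iff]
    at hedges
  have := G.symm h₁
  have := G.symm h₂
  have := G.symm h₃
  have := G.symm h₄
  refine ⟨{a, v₂}, {v₁, v₃}, ?_, ?_, ?_, ?_, fun x y => ⟨fun h => ?_, fun h => ?_⟩⟩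
  · grind [Finset.card_pair]
  · grind [Finset.card_pair]
  · simp only [Finset.disjoint_insert_left, Finset.disjoint_insert_right, Finset.disjoint_singleton]
    grind
  · rw [hC.verts_eq]
    ext
    simp only [List.mem_toFinset, support_cons, support_nil, List.mem_cons, List.not_mem_nil,
      Finset.mem_union, Finset.mem_insert, Finset.mem_singleton]
    tauto
  · have := hedges h
    simp only [Finset.mem_insert, Finset.mem_singleton]
    grind
  · simp only [Finset.mem_insert, Finset.mem_singleton] at h
    rcases h with ⟨rfl | rfl, rfl | rfl⟩ | ⟨rfl | rfl, rfl | rfl⟩ <;> assumption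

lemma IsBipartite.even_length {G : NatGraph} (hG : G.IsBipartite) {u : ℕ}
    (p : G.toSimpleGraph.Walk u u) : Even p.length := by
  obtain ⟨c, hc⟩ := hG
  exact ((Coloring.mk c fun h => hc h).even_length_iff_congr p).2 Iff.rfl

lemma exists_isCompleteBipartiteOn_two_two_isBipMinorOf {G : NatGraph} {a : ℕ}
    {C : G.toSimpleGraph.Walk a a} (hC : C.IsCycle) (heven : Even C.length) :
    ∃ H : NatGraph, H.IsCompleteBipartiteOn 2 2 ∧ H.IsBipMinorOf G := by
  induction hn : C.length using Nat.strong_induction_on generalizing G a with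
  | _ n ih =>
  obtain ⟨G₁, C₁, hC₁, hlen₁, hG₁⟩ := exists_isCycleGraph_isBipMinorOf hC
  have h3 := hC.three_le_length
  obtain h4 | h6 : n = 4 ∨ 6 ≤ n := by grind
  · exact ⟨G₁, hC₁.isCompleteBipartiteOn_two_two (by omega), hG₁⟩
  · obtain ⟨u, v, huv, b, D, hD, hlenD⟩ := hC₁.exists_isCycle_contract (by omega)
    obtain ⟨H, hH, hHG⟩ := ih D.length (by omega) hD (by grind) rfl
    exact ⟨H, hH, hHG.tail (.contract _ _ _ huv) |>.trans hG₁⟩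

end NatGraph

/-- A bipartite graph `G` is a forest (contains no cycle) if and only if
`G` does not contain `K₂,₂` as a bipartite minor. -/
theorem bipartite_forest (G : NatGraph) (hG : G.IsBipartite) :
    G.toSimpleGraph.IsAcyclic ↔
      ¬ ∃ H : NatGraph, H.IsCompleteBipartiteOn 2 2 ∧ H.IsBipMinorOf G := by
  constructor
  · rintro hac ⟨H, hH, hHG⟩
    exact hH.not_isAcyclic (hHG.isAcyclic hac)
  · intro hK _ C hC
    exact hK (NatGraph.exists_isCompleteBipartiteOn_two_two_isBipMinorOf hC (hG.even_length C))
end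

section
/- If G = (A ⊎ B, E) is a (2,2)-Laman bipartite graph and v is a vertex of G of degree exactly two, then either G is isomorphic to K_{2,2} or the graph G − v obtained by deleting v is (2,2)-Laman. -/
open SimpleGraph

/-- The number of edges of the induced subgraph of `G` on a set `X` of vertices. -/
noncomputable def edgesIn {V : Type*} (G : SimpleGraph V) (X : Set V) : ℕ :=
  (G.induce X).edgeSet.ncard

/-- A finite graph `G`, with bipartition `(A, B)` of its vertex set, is `(2,2)`-Laman if
`|A|, |B| ≥ 2`, every edge joins `A` to `B`, `G` has exactly `2(|A|+|B|) - 4` edges, and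
every subgraph on at least `3` vertices has at most `2·(number of its vertices) - 4`
edges. -/
structure IsLaman22 {V : Type*} [Fintype V] (G : SimpleGraph V) (A B : Finset V) :
    Prop where
  cover : ∀ v : V, v ∈ A ∨ v ∈ B
  disj : Disjoint A B
  bip : ∀ ⦃x y⦄, G.Adj x y → (x ∈ A ∧ y ∈ B) ∨ (x ∈ B ∧ y ∈ A)
  cardA : 2 ≤ A.card
  cardB : 2 ≤ B.card
  total : G.edgeSet.ncard = 2 * (A.card + B.card) - 4
  sparse : ∀ X : Finset V, 3 ≤ X.card → edgesIn G ↑X ≤ 2 * X.card - 4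

/-- A set `X` of vertices is critical if `|X| ≥ 3` and the induced subgraph on `X` has
exactly `2|X| - 4` edges. -/
def IsCritical {V : Type*} (G : SimpleGraph V) (X : Finset V) : Prop :=
  3 ≤ X.card ∧ edgesIn G ↑X = 2 * X.card - 4

lemma IsLaman22.symm {V : Type*} [Fintype V] {G : SimpleGraph V} {A B : Finset V}
    (h : IsLaman22 G A B) : IsLaman22 G B A where
  cover v := (h.cover v).symm
  disj := h.disj.symm
  bip _ _ hxy := (h.bip hxy).symm
  cardA := h.cardB
  cardB := h.cardA
  total := by rw [h.total, Nat.add_comm B.card A.card]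
  sparse := h.sparse

lemma edgesIn_comap {V W : Type*} (G : SimpleGraph V) (f : W → V)
    (hf : Function.Injective f) (X : Set W) :
    edgesIn (G.comap f) X = edgesIn G (f '' X) := by
  have iso : (G.comap f).induce X ≃g G.induce (f '' X) := by
    refine ⟨Equiv.Set.image f X hf, ?_⟩
    intro a b
    simp [Equiv.Set.image, Equiv.Set.imageOfInjOn]
  unfold edgesIn
  rw [← Nat.card_coe_set_eq, ← Nat.card_coe_set_eq]
  exact Nat.card_congr iso.mapEdgeSet

lemma ncard_deleteVertex {V : Type*} [Fintype V] [DecidableEq V] (G : SimpleGraph V)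
    [DecidableRel G.Adj] (v : V) :
    G.edgeSet.ncard = edgesIn G {u | u ≠ v} + G.degree v := by
  have hsub : G.incidenceSet v ⊆ G.edgeSet := G.incidenceSet_subset v
  have hfin : G.edgeSet.Finite := G.edgeSet.toFinite
  have h1 : (G.edgeSet \ G.incidenceSet v).ncard + (G.incidenceSet v).ncard
      = G.edgeSet.ncard := Set.ncard_diff_add_ncard_of_subset hsub hfin
  have hdeg : (G.incidenceSet v).ncard = G.degree v := by
    rw [← Nat.card_coe_set_eq, Nat.card_eq_fintype_card]
    exact G.card_incidenceSet_eq_degree v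
  have himg : Sym2.map (Subtype.val : {u : V // u ≠ v} → V) ''
      (G.induce {u | u ≠ v}).edgeSet = G.edgeSet \ G.incidenceSet v := by
    ext e
    constructor
    · rintro ⟨e', he', rfl⟩
      induction e' with
      | h x y =>
        simp only [Sym2.map_pair_eq]
        have hadj : G.Adj x.val y.val := he'
        refine ⟨hadj, ?_⟩
        intro hinc
        have hve : v ∈ (s(x.val, y.val) : Sym2 V) := hinc.2
        rcases Sym2.mem_iff.mp hve with h | h
        · exact x.2 h.symm
        · exact y.2 h.symm
    · rintro ⟨he, hni⟩
      induction e with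
      | h x y =>
        have hx : x ≠ v := fun h => hni ⟨he, by rw [h]; exact Sym2.mem_mk_left v y⟩
        have hy : y ≠ v := fun h => hni ⟨he, by rw [h]; exact Sym2.mem_mk_right x v⟩
        refine ⟨s(⟨x, hx⟩, ⟨y, hy⟩), ?_, rfl⟩
        exact he
  have hinj : Function.Injective (Sym2.map (Subtype.val : {u : V // u ≠ v} → V)) :=
    Sym2.map.injective Subtype.val_injective
  have h2 : edgesIn G {u | u ≠ v} = (G.edgeSet \ G.incidenceSet v).ncard := by
    rw [← himg, Set.ncard_image_of_injective _ hinj]; rfl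
  omega

lemma bip_count {V : Type*} [Fintype V] [DecidableEq V] (G : SimpleGraph V)
    [DecidableRel G.Adj] (A B : Finset V) (hdisj : Disjoint A B)
    (hbip : ∀ ⦃x y⦄, G.Adj x y → (x ∈ A ∧ y ∈ B) ∨ (x ∈ B ∧ y ∈ A)) :
    G.edgeSet.ncard = ((A ×ˢ B).filter fun p => G.Adj p.1 p.2).card := by
  rw [Set.ncard_eq_toFinset_card', ← edgeFinset]
  refine (Finset.card_bij (fun p _ => s(p.1, p.2)) ?_ ?_ ?_).symm
  · rintro ⟨a, b⟩ hp
    simp only [Finset.mem_filter, Finset.mem_product] at hp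
    exact mem_edgeFinset.mpr hp.2
  · rintro ⟨a, b⟩ hp ⟨a', b'⟩ hp' h
    simp only [Finset.mem_filter, Finset.mem_product] at hp hp'
    rcases Sym2.eq_iff.mp h with ⟨rfl, rfl⟩ | ⟨rfl, rfl⟩
    · rfl
    · exact absurd hp.1.1 (Finset.disjoint_right.mp hdisj hp'.1.2)
  · intro e he
    induction e with
    | h x y =>
      have hadj : G.Adj x y := mem_edgeFinset.mp he
      rcases hbip hadj with ⟨hx, hy⟩ | ⟨hx, hy⟩
      · exact ⟨(x, y), by simp [hx, hy, hadj], rfl⟩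
      · exact ⟨(y, x), by simp [hx, hy, hadj.symm, Sym2.eq_swap]⟩

lemma k22_iso {V : Type*} [Fintype V] [DecidableEq V] (G : SimpleGraph V)
    (A B : Finset V)
    (cover : ∀ v : V, v ∈ A ∨ v ∈ B) (hdisj : Disjoint A B)
    (hbip : ∀ ⦃x y⦄, G.Adj x y → (x ∈ A ∧ y ∈ B) ∨ (x ∈ B ∧ y ∈ A))
    (hA : A.card = 2) (hB : B.card = 2)
    (hall : ∀ a ∈ A, ∀ b ∈ B, G.Adj a b) :
    Nonempty (G ≃g completeBipartiteGraph (Fin 2) (Fin 2)) := by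
  obtain ⟨a0, a1, ha01, rfl⟩ := Finset.card_eq_two.mp hA
  obtain ⟨b0, b1, hb01, rfl⟩ := Finset.card_eq_two.mp hB
  have hd : ∀ x ∈ ({a0, a1} : Finset V), ∀ y ∈ ({b0, b1} : Finset V), x ≠ y := by
    intro x hx y hy h
    exact Finset.disjoint_left.mp hdisj hx (h ▸ hy)
  have ha0 : a0 ∈ ({a0, a1} : Finset V) := by simp
  have ha1 : a1 ∈ ({a0, a1} : Finset V) := by simp
  have hb0 : b0 ∈ ({b0, b1} : Finset V) := by simp
  have hb1 : b1 ∈ ({b0, b1} : Finset V) := by simp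
  have hab00 := hd a0 ha0 b0 hb0
  have hab01 := hd a0 ha0 b1 hb1
  have hab10 := hd a1 ha1 b0 hb0
  have hab11 := hd a1 ha1 b1 hb1
  set f : V → Fin 2 ⊕ Fin 2 := fun u =>
    if u = a0 then .inl 0 else if u = a1 then .inl 1 else
    if u = b0 then .inr 0 else .inr 1 with hf
  set g : Fin 2 ⊕ Fin 2 → V :=
    Sum.elim (fun i => if i = 0 then a0 else a1) (fun i => if i = 0 then b0 else b1) with hg
  have hcases : ∀ u : V, u = a0 ∨ u = a1 ∨ u = b0 ∨ u = b1 := by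
    intro u
    rcases cover u with h | h <;> simp only [Finset.mem_insert, Finset.mem_singleton] at h <;> tauto
  have hleft : Function.LeftInverse g f := by
    intro u
    rcases hcases u with rfl | rfl | rfl | rfl <;>
      simp [hf, hg, ha01, hb01, hab00, hab01, hab10, hab11, Ne.symm ha01,
        Ne.symm hab00, Ne.symm hab01, Ne.symm hab10, Ne.symm hab11, Ne.symm hb01]
  have hright : Function.RightInverse g f := by
    rintro (i | i) <;> fin_cases i <;>
      simp [hf, hg, ha01, Ne.symm ha01, Ne.symm hab00, Ne.symm hab01, Ne.symm hab10,
        Ne.symm hab11, hb01, Ne.symm hb01]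
  have hfl : ∀ u ∈ ({a0, a1} : Finset V), ∃ i, f u = .inl i := by
    intro u hu
    simp only [Finset.mem_insert, Finset.mem_singleton] at hu
    rcases hu with rfl | rfl
    · exact ⟨0, by simp [hf]⟩
    · exact ⟨1, by simp [hf, Ne.symm ha01]⟩
  have hfr : ∀ u ∈ ({b0, b1} : Finset V), ∃ i, f u = .inr i := by
    intro u hu
    simp only [Finset.mem_insert, Finset.mem_singleton] at hu
    rcases hu with rfl | rfl
    · exact ⟨0, by simp [hf, Ne.symm hab00, Ne.symm hab10]⟩
    · exact ⟨1, by simp [hf, Ne.symm hab01, Ne.symm hab11, Ne.symm hb01]⟩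
  have hAA : ∀ x ∈ ({a0, a1} : Finset V), ∀ y ∈ ({a0, a1} : Finset V), ¬ G.Adj x y := by
    intro x hx y hy hadj
    rcases hbip hadj with ⟨h1, h2⟩ | ⟨h1, h2⟩
    · exact Finset.disjoint_left.mp hdisj hy h2
    · exact Finset.disjoint_left.mp hdisj hx h1
  have hBB : ∀ x ∈ ({b0, b1} : Finset V), ∀ y ∈ ({b0, b1} : Finset V), ¬ G.Adj x y := by
    intro x hx y hy hadj
    rcases hbip hadj with ⟨h1, h2⟩ | ⟨h1, h2⟩
    · exact Finset.disjoint_left.mp hdisj h1 hx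
    · exact Finset.disjoint_left.mp hdisj h2 hy
  refine ⟨⟨⟨f, g, hleft, hright⟩, ?_⟩⟩
  intro u w
  simp only [completeBipartiteGraph, Equiv.coe_fn_mk]
  rcases cover u with hu | hu <;> rcases cover w with hw | hw
  · obtain ⟨i, hi⟩ := hfl u hu; obtain ⟨j, hj⟩ := hfl w hw
    simp [hi, hj, hAA u hu w hw]
  · obtain ⟨i, hi⟩ := hfl u hu; obtain ⟨j, hj⟩ := hfr w hw
    simp [hi, hj, hall u hu w hw]
  · obtain ⟨i, hi⟩ := hfr u hu; obtain ⟨j, hj⟩ := hfl w hw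
    simp [hi, hj, (hall w hw u hu).symm]
  · obtain ⟨i, hi⟩ := hfr u hu; obtain ⟨j, hj⟩ := hfr w hw
    simp [hi, hj, hBB u hu w hw]

/-- The main case analysis, assuming `v ∈ A`. -/
lemma laman_delete_aux {V : Type*} [Fintype V] [DecidableEq V]
    (G : SimpleGraph V) [DecidableRel G.Adj] (A B : Finset V) (hL : IsLaman22 G A B)
    (v : V) (hv : G.degree v = 2) (hvA : v ∈ A) :
    Nonempty (G ≃g completeBipartiteGraph (Fin 2) (Fin 2)) ∨
      IsLaman22 (G.comap (Subtype.val : {u : V // u ≠ v} → V))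
        (A.subtype (· ≠ v)) (B.subtype (· ≠ v)) := by
  have hvB : v ∉ B := fun h => Finset.disjoint_left.mp hL.disj hvA h
  have hcardA' : (A.subtype (· ≠ v)).card = A.card - 1 := by
    rw [Finset.card_subtype, Finset.filter_ne', Finset.card_erase_of_mem hvA]
  have hcardB' : (B.subtype (· ≠ v)).card = B.card := by
    rw [Finset.card_subtype, Finset.filter_ne', Finset.erase_eq_of_notMem hvB]
  rcases eq_or_lt_of_le hL.cardA with hA2 | hA3
  · -- |A| = 2 : G is K₂,₂
    left
    have htot : G.edgeSet.ncard = 2 * B.card := by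
      have := hL.total
      have := hL.cardB
      omega
    have hcount := bip_count G A B hL.disj hL.bip
    have hfull : ((A ×ˢ B).filter fun p => G.Adj p.1 p.2) = A ×ˢ B := by
      apply Finset.eq_of_subset_of_card_le (Finset.filter_subset _ _)
      rw [← hcount, htot, Finset.card_product, ← hA2]
    have hall : ∀ a ∈ A, ∀ b ∈ B, G.Adj a b := by
      intro a ha b hb
      have : (a, b) ∈ (A ×ˢ B).filter fun p => G.Adj p.1 p.2 := by
        rw [hfull]; exact Finset.mem_product.mpr ⟨ha, hb⟩
      exact (Finset.mem_filter.mp this).2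
    have hNB : G.neighborFinset v = B := by
      apply Finset.Subset.antisymm
      · intro u hu
        have hadj : G.Adj v u := (mem_neighborFinset G v u).mp hu
        rcases hL.bip hadj with ⟨_, h2⟩ | ⟨h1, _⟩
        · exact h2
        · exact absurd h1 hvB
      · intro b hb
        exact (mem_neighborFinset G v b).mpr (hall v hvA b hb)
    have hB2 : B.card = 2 := by
      rw [← hNB, card_neighborFinset_eq_degree, hv]
    exact k22_iso G A B hL.cover hL.disj hL.bip hA2.symm hB2 hall
  · -- |A| ≥ 3 : G - v is (2,2)-Laman
    right
    have hdel := ncard_deleteVertex G v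
    have hcomap : (G.comap (Subtype.val : {u : V // u ≠ v} → V)).edgeSet.ncard
        = edgesIn G {u | u ≠ v} := rfl
    refine ⟨?_, ?_, ?_, ?_, ?_, ?_, ?_⟩
    · rintro ⟨u, hu⟩
      rcases hL.cover u with h | h
      · exact Or.inl (Finset.mem_subtype.mpr h)
      · exact Or.inr (Finset.mem_subtype.mpr h)
    · rw [Finset.disjoint_left]
      rintro ⟨u, hu⟩ h1 h2
      exact Finset.disjoint_left.mp hL.disj (Finset.mem_subtype.mp h1) (Finset.mem_subtype.mp h2)
    · rintro ⟨x, hx⟩ ⟨y, hy⟩ hadj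
      rcases hL.bip hadj with ⟨h1, h2⟩ | ⟨h1, h2⟩
      · exact Or.inl ⟨Finset.mem_subtype.mpr h1, Finset.mem_subtype.mpr h2⟩
      · exact Or.inr ⟨Finset.mem_subtype.mpr h1, Finset.mem_subtype.mpr h2⟩
    · omega
    · have := hL.cardB; omega
    · rw [hcomap]
      have h1 := hL.total
      have h2 := hL.cardB
      omega
    · intro X hX
      have himg : (edgesIn (G.comap (Subtype.val : {u : V // u ≠ v} → V)) ↑X)
          = edgesIn G ↑(X.image Subtype.val) := by
        rw [edgesIn_comap G _ Subtype.val_injective, Finset.coe_image]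
      have hcard : (X.image Subtype.val).card = X.card :=
        Finset.card_image_of_injective X Subtype.val_injective
      rw [himg, ← hcard]
      exact hL.sparse _ (by omega)

/-- If `G` is a `(2,2)`-Laman bipartite graph and `v` is a vertex of
degree exactly two, then either `G` is isomorphic to `K₂,₂` or the induced subgraph
`G - v` is `(2,2)`-Laman. -/
theorem laman_delete_degree_two {V : Type*} [Fintype V] [DecidableEq V]
    (G : SimpleGraph V) [DecidableRel G.Adj] (A B : Finset V) (hL : IsLaman22 G A B)
    (v : V) (hv : G.degree v = 2) :
    Nonempty (G ≃g completeBipartiteGraph (Fin 2) (Fin 2)) ∨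
      IsLaman22 (G.comap (Subtype.val : {u : V // u ≠ v} → V))
        (A.subtype (· ≠ v)) (B.subtype (· ≠ v)) := by
  rcases hL.cover v with hvA | hvB
  · exact laman_delete_aux G A B hL v hv hvA
  · rcases laman_delete_aux G B A hL.symm v hv hvB with h | h
    · exact Or.inl h
    · exact Or.inr h.symm
end

section
/- Let G = (A ⊎ B, E) be a (2,2)-Laman bipartite graph and let X, Y ⊆ V be critical sets such that X ∩ Y contains at least two distinct vertices lying on the same side of the bipartition. Then X ∪ Y is critical, i.e., E(X ∪ Y) = 2|X ∪ Y| − 4. -/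
open SimpleGraph

/-- The edges of `G` lying inside `X`. -/
def edgeSetIn {V : Type*} (G : SimpleGraph V) (X : Set V) : Set (Sym2 V) :=
  {e ∈ G.edgeSet | ∀ v ∈ e, v ∈ X}

lemma edgesIn_eq {V : Type*} (G : SimpleGraph V) (X : Set V) :
    edgesIn G X = (edgeSetIn G X).ncard := by
  have himg : Sym2.map (Subtype.val : X → V) '' (G.induce X).edgeSet = edgeSetIn G X := by
    ext e
    constructor
    · rintro ⟨e', he', rfl⟩
      induction e' using Sym2.ind with
      | _ a b =>
        rw [SimpleGraph.mem_edgeSet] at he'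
        refine ⟨he', ?_⟩
        intro v hv
        rw [Sym2.map_pair_eq, Sym2.mem_iff] at hv
        rcases hv with rfl | rfl
        · exact a.2
        · exact b.2
    · rintro ⟨he, hX⟩
      induction e using Sym2.ind with
      | _ a b =>
        rw [SimpleGraph.mem_edgeSet] at he
        refine ⟨s(⟨a, hX a (by simp)⟩, ⟨b, hX b (by simp)⟩), ?_, by simp⟩
        exact he
  rw [edgesIn, ← himg, Set.ncard_image_of_injective _ (Sym2.map.injective Subtype.val_injective)]


lemma edgesIn_submodular {V : Type*} [Fintype V] [DecidableEq V] (G : SimpleGraph V)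
    (X Y : Finset V) :
    edgesIn G ↑X + edgesIn G ↑Y ≤ edgesIn G ↑(X ∪ Y) + edgesIn G ↑(X ∩ Y) := by
  rw [edgesIn_eq, edgesIn_eq, edgesIn_eq, edgesIn_eq]
  have hsub : edgeSetIn G ↑X ∪ edgeSetIn G ↑Y ⊆ edgeSetIn G ↑(X ∪ Y) := by
    rintro e (⟨he, hv⟩ | ⟨he, hv⟩) <;>
      exact ⟨he, fun v hv' => by simp [Finset.mem_union, hv v hv']⟩
  have hinter : edgeSetIn G ↑X ∩ edgeSetIn G ↑Y = edgeSetIn G ↑(X ∩ Y) := by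
    ext e
    simp only [edgeSetIn, Set.mem_inter_iff, Set.mem_setOf_eq, Finset.coe_inter]
    constructor
    · rintro ⟨⟨he, h1⟩, ⟨_, h2⟩⟩
      exact ⟨he, fun v hv => ⟨h1 v hv, h2 v hv⟩⟩
    · rintro ⟨he, h⟩
      exact ⟨⟨he, fun v hv => (h v hv).1⟩, ⟨he, fun v hv => (h v hv).2⟩⟩
  calc (edgeSetIn G ↑X).ncard + (edgeSetIn G ↑Y).ncard
      = (edgeSetIn G ↑X ∪ edgeSetIn G ↑Y).ncard + (edgeSetIn G ↑X ∩ edgeSetIn G ↑Y).ncard := by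
        rw [Set.ncard_union_add_ncard_inter _ _ (Set.toFinite _) (Set.toFinite _)]
    _ ≤ (edgeSetIn G ↑(X ∪ Y)).ncard + (edgeSetIn G ↑(X ∩ Y)).ncard := by
        exact add_le_add (Set.ncard_le_ncard hsub (Set.toFinite _)) (le_of_eq (by rw [hinter]))


/-- In a `(2,2)`-Laman graph with bipartition `(A, B)`, if `X` and `Y`
are critical sets whose intersection contains two distinct vertices on the same side of
the bipartition, then `X ∪ Y` is critical. -/
theorem laman_union_critical {V : Type*} [Fintype V] [DecidableEq V]
    (G : SimpleGraph V) (A B : Finset V) (hL : IsLaman22 G A B) (X Y : Finset V)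
    (hX : IsCritical G X) (hY : IsCritical G Y) (u w : V) (huw : u ≠ w)
    (hu : u ∈ X ∩ Y) (hw : w ∈ X ∩ Y)
    (hside : (u ∈ A ∧ w ∈ A) ∨ (u ∈ B ∧ w ∈ B)) :
    IsCritical G (X ∪ Y) := by
  obtain ⟨hX3, hXe⟩ := hX
  obtain ⟨hY3, hYe⟩ := hY
  have hcardU : 3 ≤ (X ∪ Y).card := le_trans hX3 (Finset.card_le_card Finset.subset_union_left)
  have hcards : X.card + Y.card = (X ∪ Y).card + (X ∩ Y).card :=
    (Finset.card_union_add_card_inter X Y).symm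
  have hsub := edgesIn_submodular G X Y
  have hsparseU := hL.sparse (X ∪ Y) hcardU
  have hI2 : 2 ≤ (X ∩ Y).card := by
    have : ({u, w} : Finset V) ⊆ X ∩ Y := by
      intro v hv
      simp only [Finset.mem_insert, Finset.mem_singleton] at hv
      rcases hv with rfl | rfl <;> assumption
    calc 2 = ({u, w} : Finset V).card := by rw [Finset.card_insert_of_notMem (by simp [huw]), Finset.card_singleton]
    _ ≤ _ := Finset.card_le_card this
  refine ⟨hcardU, ?_⟩
  rcases eq_or_lt_of_le hI2 with h2 | h3
  · -- |X ∩ Y| = 2, so X ∩ Y = {u, w} and there are no edges inside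
    have hIeq : X ∩ Y = {u, w} := by
      refine (Finset.eq_of_subset_of_card_le ?_ ?_).symm
      · intro v hv
        simp only [Finset.mem_insert, Finset.mem_singleton] at hv
        rcases hv with rfl | rfl <;> assumption
      · rw [← h2, Finset.card_insert_of_notMem (by simp [huw]), Finset.card_singleton]
    have hnoadj : ¬ G.Adj u w := by
      intro h
      rcases hL.bip h with ⟨hA, hB⟩ | ⟨hB, hA⟩ <;> rcases hside with ⟨h1, h2⟩ | ⟨h1, h2⟩
      · exact (Finset.disjoint_left.mp hL.disj h2) hB
      · exact (Finset.disjoint_left.mp hL.disj hA) h1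
      · exact (Finset.disjoint_left.mp hL.disj h1) hB
      · exact (Finset.disjoint_left.mp hL.disj hA) h2
    have hIzero : edgesIn G ↑(X ∩ Y) = 0 := by
      rw [edgesIn_eq, Set.ncard_eq_zero (Set.toFinite _)]
      ext e
      simp only [Set.mem_empty_iff_false, iff_false]
      rintro ⟨he, hv⟩
      induction e using Sym2.ind with
      | _ a b =>
        rw [SimpleGraph.mem_edgeSet] at he
        have ha := hv a (by simp)
        have hb := hv b (by simp)
        rw [hIeq] at ha hb
        simp only [Finset.coe_insert, Finset.coe_singleton, Set.mem_insert_iff,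
          Set.mem_singleton_iff] at ha hb
        have hab := he.ne
        rcases ha with rfl | rfl <;> rcases hb with rfl | rfl
        · exact hab rfl
        · exact hnoadj he
        · exact hnoadj he.symm
        · exact hab rfl
    omega
  · have hsparseI := hL.sparse (X ∩ Y) h3
    omega
end

section
/- Let G = (A ⊎ B, E) be a (2,2)-Laman bipartite graph, let X ⊆ V be a critical set, and suppose X contains two non-adjacent vertices p and b lying on opposite sides of the bipartition. Then |X| ≥ 4 and b has at least two neighbors in X. -/
open SimpleGraph

/-- `edgesIn` counts the edges of `G` all of whose endpoints lie in `X`. -/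
lemma edgesIn_eq_ncard_filter {V : Type*} (G : SimpleGraph V) (X : Set V) :
    edgesIn G X = {e ∈ G.edgeSet | ∀ v ∈ e, v ∈ X}.ncard := by
  rw [edgesIn, ← Set.ncard_image_of_injective (G.induce X).edgeSet
    (Sym2.map.injective (Subtype.val_injective (p := fun v => v ∈ X)))]
  congr 1
  ext e
  constructor
  · rintro ⟨e', he', rfl⟩
    induction e' using Sym2.ind with
    | _ x y =>
      simp only [SimpleGraph.mem_edgeSet] at he'
      refine ⟨he', ?_⟩
      intro v hv
      rw [Sym2.map_pair_eq, Sym2.mem_iff] at hv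
      rcases hv with rfl | rfl
      · exact x.2
      · exact y.2
  · rintro ⟨he, hX⟩
    induction e using Sym2.ind with
    | _ x y =>
      refine ⟨s(⟨x, hX x (by simp)⟩, ⟨y, hX y (by simp)⟩), ?_, by simp⟩
      simpa using he

/-- Deleting a vertex `b` from `X` removes at most `|N(b) ∩ X|` edges. -/
lemma edgesIn_le_sdiff {V : Type*} [Fintype V] (G : SimpleGraph V) (X : Set V) (b : V) :
    edgesIn G X ≤ edgesIn G (X \ {b}) + (G.neighborSet b ∩ X).ncard := by
  rw [edgesIn_eq_ncard_filter, edgesIn_eq_ncard_filter]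
  have hsub : {e ∈ G.edgeSet | ∀ v ∈ e, v ∈ X} ⊆
      {e ∈ G.edgeSet | ∀ v ∈ e, v ∈ X \ {b}} ∪ ((fun v => s(b, v)) '' (G.neighborSet b ∩ X)) := by
    rintro e ⟨he, hX⟩
    induction e using Sym2.ind with
    | _ x y =>
      rw [SimpleGraph.mem_edgeSet] at he
      by_cases hbx : x = b
      · subst hbx
        exact Or.inr ⟨y, ⟨he, hX y (by simp)⟩, rfl⟩
      · by_cases hby : y = b
        · subst hby
          exact Or.inr ⟨x, ⟨he.symm, hX x (by simp)⟩, Sym2.eq_swap⟩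
        · refine Or.inl ⟨by simpa using he, ?_⟩
          intro v hv
          rw [Sym2.mem_iff] at hv
          rcases hv with rfl | rfl
          · exact ⟨hX v (by simp), hbx⟩
          · exact ⟨hX v (by simp), hby⟩
  calc {e ∈ G.edgeSet | ∀ v ∈ e, v ∈ X}.ncard
      ≤ ({e ∈ G.edgeSet | ∀ v ∈ e, v ∈ X \ {b}} ∪
          ((fun v => s(b, v)) '' (G.neighborSet b ∩ X))).ncard :=
        Set.ncard_le_ncard hsub (Set.toFinite _)
    _ ≤ {e ∈ G.edgeSet | ∀ v ∈ e, v ∈ X \ {b}}.ncard +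
          ((fun v => s(b, v)) '' (G.neighborSet b ∩ X)).ncard := Set.ncard_union_le _ _
    _ ≤ _ := by
        gcongr
        exact Set.ncard_image_le (Set.toFinite _)

/-- In a `(2,2)`-Laman graph with bipartition `(A, B)`, if a critical
set `X` contains two non-adjacent vertices `p` and `b` lying on opposite sides of the
bipartition, then `|X| ≥ 4` and `b` has at least two neighbors in `X`. -/
theorem laman_critical_two_neighbors {V : Type*} [Fintype V] (G : SimpleGraph V)
    (A B : Finset V) (hL : IsLaman22 G A B) (X : Finset V) (hX : IsCritical G X)
    (p b : V) (hp : p ∈ X) (hb : b ∈ X) (hnadj : ¬ G.Adj p b)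
    (hside : (p ∈ A ∧ b ∈ B) ∨ (p ∈ B ∧ b ∈ A)) :
    4 ≤ X.card ∧ 2 ≤ (G.neighborSet b ∩ ↑X).ncard := by
  classical
  obtain ⟨hX3, hXE⟩ := hX
  have dAB : ∀ v : V, v ∈ A → v ∈ B → False := fun v h1 h2 =>
    Finset.disjoint_left.mp hL.disj h1 h2
  have hpb : p ≠ b := by
    rintro rfl
    rcases hside with ⟨h1, h2⟩ | ⟨h1, h2⟩
    · exact dAB p h1 h2
    · exact dAB p h2 h1
  -- a vertex cannot be adjacent to both p and b
  have hnotboth : ∀ c : V, G.Adj p c → G.Adj b c → False := by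
    intro c hpc hbc
    rcases hside with ⟨hpA, hbB⟩ | ⟨hpB, hbA⟩
    · have hcB : c ∈ B := by
        rcases hL.bip hpc with ⟨_, h⟩ | ⟨h, _⟩
        · exact h
        · exact (dAB p hpA h).elim
      have hcA : c ∈ A := by
        rcases hL.bip hbc with ⟨h, _⟩ | ⟨_, h⟩
        · exact (dAB b h hbB).elim
        · exact h
      exact dAB c hcA hcB
    · have hcA : c ∈ A := by
        rcases hL.bip hpc with ⟨h, _⟩ | ⟨_, h⟩
        · exact (dAB p h hpB).elim
        · exact h
      have hcB : c ∈ B := by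
        rcases hL.bip hbc with ⟨_, h⟩ | ⟨h, _⟩
        · exact h
        · exact (dAB b hbA h).elim
      exact dAB c hcA hcB
  -- first part: |X| ≥ 4
  have h4 : 4 ≤ X.card := by
    by_contra h4
    have hcard3 : X.card = 3 := by omega
    -- get a third vertex c
    have hss : ({p, b} : Finset V) ⊂ X := by
      refine Finset.ssubset_of_subset_of_ssubset (Finset.Subset.refl _) ?_
      rw [Finset.ssubset_iff_subset_ne]
      constructor
      · intro v hv
        rcases Finset.mem_insert.mp hv with rfl | hv
        · exact hp
        · rw [Finset.mem_singleton] at hv; subst hv; exact hb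
      · intro h
        have : ({p, b} : Finset V).card = 3 := by rw [h, hcard3]
        rw [Finset.card_insert_of_notMem (by simpa using hpb), Finset.card_singleton] at this
        omega
    obtain ⟨c, hcX, hc⟩ := Finset.exists_of_ssubset hss
    have hcp : c ≠ p := fun h => hc (by simp [h])
    have hcb : c ≠ b := fun h => hc (by simp [h])
    have hXeq : X = ({p, b, c} : Finset V) := by
      refine (Finset.eq_of_subset_of_card_le ?_ ?_).symm
      · intro v hv
        rcases Finset.mem_insert.mp hv with rfl | hv
        · exact hp
        · rcases Finset.mem_insert.mp hv with rfl | hv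
          · exact hb
          · rw [Finset.mem_singleton] at hv; subst hv; exact hcX
      · rw [hcard3]
        have : ({p, b, c} : Finset V).card = 3 := by
          rw [Finset.card_insert_of_notMem (by simp [hpb, hcp.symm]),
            Finset.card_insert_of_notMem (by simpa using hcb.symm), Finset.card_singleton]
        omega
    -- at most one edge inside X
    have hmem : ∀ v : V, v ∈ (↑X : Set V) → v = p ∨ v = b ∨ v = c := by
      intro v hv
      rw [hXeq] at hv
      simpa using hv
    have hle1 : edgesIn G ↑X ≤ 1 := by
      rw [edgesIn_eq_ncard_filter]
      by_cases hpc : G.Adj p c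
      · have hsub : {e ∈ G.edgeSet | ∀ v ∈ e, v ∈ (↑X : Set V)} ⊆ {s(p, c)} := by
          rintro e ⟨he, hXe⟩
          induction e using Sym2.ind with
          | _ x y =>
            rw [SimpleGraph.mem_edgeSet] at he
            have hx := hmem x (hXe x (by simp))
            have hy := hmem y (hXe y (by simp))
            have hbc : ¬ G.Adj b c := fun h => hnotboth c hpc h
            rcases hx with rfl | rfl | rfl <;> rcases hy with rfl | rfl | rfl <;>
              simp_all [Sym2.eq_swap, G.adj_comm]
        calc _ ≤ ({s(p, c)} : Set (Sym2 V)).ncard :=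
              Set.ncard_le_ncard hsub (Set.finite_singleton _)
          _ = 1 := Set.ncard_singleton _
      · have hsub : {e ∈ G.edgeSet | ∀ v ∈ e, v ∈ (↑X : Set V)} ⊆ {s(b, c)} := by
          rintro e ⟨he, hXe⟩
          induction e using Sym2.ind with
          | _ x y =>
            rw [SimpleGraph.mem_edgeSet] at he
            have hx := hmem x (hXe x (by simp))
            have hy := hmem y (hXe y (by simp))
            rcases hx with rfl | rfl | rfl <;> rcases hy with rfl | rfl | rfl <;>
              simp_all [Sym2.eq_swap, G.adj_comm]
        calc _ ≤ ({s(b, c)} : Set (Sym2 V)).ncard :=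
              Set.ncard_le_ncard hsub (Set.finite_singleton _)
          _ = 1 := Set.ncard_singleton _
    omega
  refine ⟨h4, ?_⟩
  -- second part
  by_contra h2
  push_neg at h2
  have h2' : (G.neighborSet b ∩ ↑X).ncard ≤ 1 := by omega
  have hdel := edgesIn_le_sdiff G (↑X) b
  have hcoe : ((↑X : Set V) \ {b}) = ↑(X.erase b) := by
    rw [Finset.coe_erase]
  rw [hcoe] at hdel
  have hcardE : (X.erase b).card = X.card - 1 := Finset.card_erase_of_mem hb
  have hsparse := hL.sparse (X.erase b) (by omega)
  omega
end

section
/- Let G = (A ⊎ B, E) be a (2,2)-Laman bipartite graph in which every vertex has degree at least three, and let a_0 ∈ A be a vertex of degree three with neighbors b_1, b_2, b_3 ∈ B. Then at least two of b_1, b_2, b_3 have a non-neighbor in A, i.e., at most one of them is adjacent to every vertex of A. -/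
open SimpleGraph

lemma edgesIn_eq_ncard {V : Type*} (G : SimpleGraph V) (X : Set V) :
    edgesIn G X = {e | e ∈ G.edgeSet ∧ ∀ v ∈ e, v ∈ X}.ncard := by
  classical
  have hinj : Function.Injective (Sym2.map (Subtype.val : X → V)) :=
    Sym2.map.injective Subtype.val_injective
  have himg : Sym2.map (Subtype.val : X → V) '' (G.induce X).edgeSet
      = {e | e ∈ G.edgeSet ∧ ∀ v ∈ e, v ∈ X} := by
    ext e
    constructor
    · rintro ⟨e', he', rfl⟩
      induction e' using Sym2.ind with
      | _ u v =>
        simp only [SimpleGraph.mem_edgeSet] at he'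
        refine ⟨by simpa using he', ?_⟩
        intro w hw
        rw [Sym2.map_pair_eq, Sym2.mem_iff] at hw
        rcases hw with rfl | rfl
        · exact u.2
        · exact v.2
    · rintro ⟨he, hX⟩
      induction e using Sym2.ind with
      | _ u v =>
        refine ⟨s(⟨u, hX u (by simp)⟩, ⟨v, hX v (by simp)⟩), ?_, by simp⟩
        simpa [SimpleGraph.mem_edgeSet] using he
  rw [edgesIn, ← Set.ncard_image_of_injective _ hinj, himg]

lemma laman_aux {V : Type*} [Fintype V] (G : SimpleGraph V)
    [DecidableRel G.Adj] (A B : Finset V) (hL : IsLaman22 G A B)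
    (hmin : ∀ u : V, 3 ≤ G.degree u)
    (x y z : V) (hxB : x ∈ B) (hyB : y ∈ B) (hzB : z ∈ B)
    (hxy : x ≠ y) (hxz : x ≠ z) (hyz : y ≠ z)
    (hx : ∀ a ∈ A, G.Adj x a) (hy : ∀ a ∈ A, G.Adj y a) : False := by
  classical
  have hxA : x ∉ A := Finset.disjoint_right.mp hL.disj hxB
  have hyA : y ∉ A := Finset.disjoint_right.mp hL.disj hyB
  have hzA : z ∉ A := Finset.disjoint_right.mp hL.disj hzB
  set Y : Finset V := insert x (insert y (insert z A)) with hY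
  have hcardY : Y.card = A.card + 3 := by
    rw [hY, Finset.card_insert_of_notMem (by simp [hxy, hxz, hxA]),
      Finset.card_insert_of_notMem (by simp [hyz, hyA]),
      Finset.card_insert_of_notMem hzA]
  -- neighbors of z are in A
  have hzN : ∀ w, G.Adj z w → w ∈ A := by
    intro w hw
    rcases hL.bip hw with ⟨h1, _⟩ | ⟨_, h2⟩
    · exact absurd h1 hzA
    · exact h2
  set T1 : Finset (Sym2 V) := A.image (fun a => s(x, a)) with hT1
  set T2 : Finset (Sym2 V) := A.image (fun a => s(y, a)) with hT2
  set T3 : Finset (Sym2 V) := (G.neighborFinset z).image (fun a => s(z, a)) with hT3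
  have hinj : ∀ v : V, Function.Injective (fun a : V => s(v, a)) :=
    fun v a b h => Sym2.congr_right.mp h
  have hd12 : Disjoint T1 T2 := by
    rw [Finset.disjoint_left]
    rintro e he1 he2
    simp only [hT1, hT2, Finset.mem_image] at he1 he2
    obtain ⟨a, ha, rfl⟩ := he1
    obtain ⟨a', ha', he⟩ := he2
    rcases Sym2.eq_iff.mp he.symm with ⟨h1, _⟩ | ⟨h1, _⟩
    · exact hxy h1
    · exact hxA (by rw [h1]; exact ha')
  have hd3 : Disjoint (T1 ∪ T2) T3 := by
    rw [Finset.disjoint_left]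
    rintro e he1 he3
    simp only [hT1, hT2, hT3, Finset.mem_union, Finset.mem_image,
      SimpleGraph.mem_neighborFinset] at he1 he3
    obtain ⟨a', ha', he⟩ := he3
    have ha'A : a' ∈ A := hzN a' ha'
    rcases he1 with ⟨a, ha, rfl⟩ | ⟨a, ha, rfl⟩
    · rcases Sym2.eq_iff.mp he.symm with ⟨h1, _⟩ | ⟨h1, _⟩
      · exact hxz h1
      · exact hxA (by rw [h1]; exact ha'A)
    · rcases Sym2.eq_iff.mp he.symm with ⟨h1, _⟩ | ⟨h1, _⟩
      · exact hyz h1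
      · exact hyA (by rw [h1]; exact ha'A)
  have hcardT : (T1 ∪ T2 ∪ T3).card = 2 * A.card + G.degree z := by
    rw [Finset.card_union_of_disjoint hd3, Finset.card_union_of_disjoint hd12,
      hT1, hT2, hT3, Finset.card_image_of_injective _ (hinj x),
      Finset.card_image_of_injective _ (hinj y),
      Finset.card_image_of_injective _ (hinj z), SimpleGraph.card_neighborFinset_eq_degree]
    ring
  have hsub : (↑(T1 ∪ T2 ∪ T3) : Set (Sym2 V)) ⊆ {e | e ∈ G.edgeSet ∧ ∀ v ∈ e, v ∈ (↑Y : Set V)} := by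
    intro e he
    simp only [Finset.coe_union, Set.mem_union, Finset.mem_coe, hT1, hT2, hT3,
      Finset.mem_image, SimpleGraph.mem_neighborFinset] at he
    have hmemY : ∀ a ∈ A, a ∈ Y := fun a ha => by simp [hY, ha]
    have hxY : x ∈ Y := by simp [hY]
    have hyY : y ∈ Y := by simp [hY]
    have hzY : z ∈ Y := by simp [hY]
    rcases he with (⟨a, ha, rfl⟩ | ⟨a, ha, rfl⟩) | ⟨a, ha, rfl⟩
    · refine ⟨hx a ha, ?_⟩
      intro v hv
      rcases Sym2.mem_iff.mp hv with rfl | rfl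
      · exact hxY
      · exact hmemY _ ha
    · refine ⟨hy a ha, ?_⟩
      intro v hv
      rcases Sym2.mem_iff.mp hv with rfl | rfl
      · exact hyY
      · exact hmemY _ ha
    · refine ⟨ha, ?_⟩
      intro v hv
      rcases Sym2.mem_iff.mp hv with rfl | rfl
      · exact hzY
      · exact hmemY _ (hzN _ ha)
  have hlow : 2 * A.card + 3 ≤ edgesIn G ↑Y := by
    have h1 : (T1 ∪ T2 ∪ T3).card ≤ edgesIn G ↑Y := by
      rw [edgesIn_eq_ncard, ← Set.ncard_coe_finset]
      exact Set.ncard_le_ncard hsub (Set.toFinite _)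
    have := hmin z
    omega
  have hhigh := hL.sparse Y (by omega)
  have hA2 := hL.cardA
  omega

/-- Let `G` be a `(2,2)`-Laman bipartite graph with minimum degree at
least three, and let `a₀ ∈ A` be a vertex of degree three with neighbors `b 0, b 1, b 2`.
Then at least two of `b 0, b 1, b 2` have a non-neighbor in `A`. -/
theorem laman_two_nonneighbors {V : Type*} [Fintype V] (G : SimpleGraph V)
    [DecidableRel G.Adj] (A B : Finset V) (hL : IsLaman22 G A B)
    (hmin : ∀ u : V, 3 ≤ G.degree u)
    (a₀ : V) (ha₀ : a₀ ∈ A) (hdeg : G.degree a₀ = 3)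
    (b : Fin 3 → V) (hb : Function.Injective b)
    (hnbrs : G.neighborSet a₀ = {b 0, b 1, b 2}) :
    ∃ i j : Fin 3, i ≠ j ∧ (∃ a ∈ A, ¬ G.Adj (b i) a) ∧ (∃ a ∈ A, ¬ G.Adj (b j) a) := by
  classical
  by_contra hcon
  push_neg at hcon
  have hBmem : ∀ i : Fin 3, b i ∈ B := by
    intro i
    have hadj : G.Adj a₀ (b i) := by
      have : b i ∈ G.neighborSet a₀ := by
        rw [hnbrs]; fin_cases i <;> simp
      exact this
    rcases hL.bip hadj with ⟨_, h⟩ | ⟨h, _⟩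
    · exact h
    · exact absurd ha₀ (Finset.disjoint_right.mp hL.disj h)
  have key : ∀ i j k : Fin 3, i ≠ j → i ≠ k → j ≠ k →
      (∀ a ∈ A, G.Adj (b i) a) → (∀ a ∈ A, G.Adj (b j) a) → False := by
    intro i j k hij hik hjk hi hj
    exact laman_aux G A B hL hmin (b i) (b j) (b k) (hBmem i) (hBmem j) (hBmem k)
      (fun h => hij (hb h)) (fun h => hik (hb h)) (fun h => hjk (hb h)) hi hj
  by_cases h0 : ∃ a ∈ A, ¬ G.Adj (b 0) a
  · exact key 1 2 0 (by decide) (by decide) (by decide)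
      (hcon 0 1 (by decide) h0) (hcon 0 2 (by decide) h0)
  · push_neg at h0
    by_cases h1 : ∃ a ∈ A, ¬ G.Adj (b 1) a
    · exact key 0 2 1 (by decide) (by decide) (by decide) h0 (hcon 1 2 (by decide) h1)
    · push_neg at h1
      exact key 0 1 2 (by decide) (by decide) (by decide) h0 h1
end
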